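/- arXiv:1311.4321 — 7 statements merged into one kernel-verified Lean document; each statement's English description precedes it below -/
import Mathlib

section
/- The function r(u,v,x,y) = (e^{u-v} - e^{x-y}) / ((e^{u-v} - 1)(e^{x-y} - 1)) satisfies the scalar associative Yang–Baxter equation r(w,u,z,x)·r(v,w,y,x) + r(u,v,x,y)·r(w,u,z,y) + r(v,w,y,z)·r(u,v,x,z) = 0 whenever all denominators are nonzero. -/
theorem stmt_2 (u v w x y z : ℂ)
    (h1 : Complex.exp (w - u) - 1 ≠ 0) (h2 : Complex.exp (z - x) - 1 ≠ 0)
    (h3 : Complex.exp (v - w) - 1 ≠ 0) (h4 : Complex.exp (y - x) - 1 ≠ 0)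
    (h5 : Complex.exp (u - v) - 1 ≠ 0) (h6 : Complex.exp (x - y) - 1 ≠ 0)
    (h7 : Complex.exp (z - y) - 1 ≠ 0) (h8 : Complex.exp (y - z) - 1 ≠ 0)
    (h9 : Complex.exp (x - z) - 1 ≠ 0) :
    let r : ℂ → ℂ → ℂ → ℂ → ℂ := fun u v x y =>
      (Complex.exp (u - v) - Complex.exp (x - y)) /
        ((Complex.exp (u - v) - 1) * (Complex.exp (x - y) - 1))
    r w u z x * r v w y x + r u v x y * r w u z y + r v w y z * r u v x z = 0 := by
  intro r
  have key : ∀ a b : ℂ, Complex.exp (a - b) - 1 ≠ 0 → Complex.exp a - Complex.exp b ≠ 0 := by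
    intro a b h hc
    apply h
    rw [Complex.exp_sub, div_sub_one (Complex.exp_ne_zero b)]
    exact div_eq_zero_iff.mpr (Or.inl hc)
  have H1 := key _ _ h1
  have H2 := key _ _ h2
  have H3 := key _ _ h3
  have H4 := key _ _ h4
  have H5 := key _ _ h5
  have H6 := key _ _ h6
  have H7 := key _ _ h7
  have H8 := key _ _ h8
  have H9 := key _ _ h9
  simp only [r, Complex.exp_sub]
  field_simp
  ring
end

section
/- Suppose β : ℂ⁴ → ℂ satisfies β(u,v,x,y) = -β(v,u,y,x) and β(w,u,z,y) - β(w,u,z,x) + β(v,w,y,z) - β(v,w,x,z) = 0 for all u,v,w,x,y,z ∈ ℂ. Then there exist functions a, b, c : ℂ² → ℂ with a(u,v) = -a(v,u) and b(x,y) = -b(y,x) such that β(u,v,x,y) = a(u,v) + b(x,y) + c(v,x) - c(u,y). -/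
theorem stmt_5 (β : ℂ → ℂ → ℂ → ℂ → ℂ)
    (hskew : ∀ u v x y, β u v x y = -β v u y x)
    (hfour : ∀ u v w x y z, β w u z y - β w u z x + β v w y z - β v w x z = 0) :
    ∃ a b c : ℂ → ℂ → ℂ,
      (∀ u v, a u v = -a v u) ∧ (∀ x y, b x y = -b y x) ∧
      (∀ u v x y, β u v x y = a u v + b x y + c v x - c u y) := by
  have E1 : ∀ u v x y, β u v x y - β u v 0 y - β 0 v x y + β 0 v 0 y = 0 := by
    intro u v x y
    linear_combination hfour 0 u v 0 x y - hfour 0 0 v 0 x y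
  have E2 : ∀ u v x y, β u v x y - β u v x 0 - β u 0 x y + β u 0 x 0 = 0 := by
    intro u v x y
    linear_combination hfour v 0 u 0 y x - hfour 0 0 u 0 y x
  refine ⟨fun u v => β u v 0 0, fun x y => β 0 0 x y,
    fun v x => β 0 v x 0 - β 0 v 0 0 - β 0 0 x 0, ?_, ?_, ?_⟩
  · intro u v; linear_combination hskew u v 0 0
  · intro x y; linear_combination hskew 0 0 x y
  · intro u v x y
    linear_combination E1 u v x y + E2 u v 0 y + E2 0 v x y - E2 0 v 0 y +
      hskew u 0 0 y - hskew u 0 0 0 - hskew 0 0 0 y + (1/2) * hskew 0 0 0 0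
end

section
/- Let g, h : ℂ → ℂ be injective functions and ε ∈ {0, 1}. Define α(u,v) = 1/(g(u) - g(v)), β(u,v) = 1/(h(u) - h(v)), δ(u,v) = ε/(g(v) - h(u)) (assuming g(v) ≠ h(u) everywhere when ε = 1). Then the system of functional equations α(v,w)α(u,v) + α(w,u)α(v,w) + α(u,v)α(w,u) = 0, β(v,w)β(u,v) + β(w,u)β(v,w) + β(u,v)β(w,u) = 0, δ(v,u)δ(v,w) = α(w,u)(δ(v,u) - δ(v,w)), and δ(w,v)δ(u,v) = β(w,u)(δ(w,v) - δ(u,v)) holds at all points where the expressions are defined. -/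
section PartialFractions

variable {K : Type*} [Field K]

theorem one_div_sub_mul_one_div_sub_cyclic {a b c : K} (hab : a ≠ b) (hbc : b ≠ c)
    (hca : c ≠ a) :
    1 / (b - c) * (1 / (a - b)) + 1 / (c - a) * (1 / (b - c)) + 1 / (a - b) * (1 / (c - a)) = 0 := by
  have : a - b ≠ 0 := sub_ne_zero.mpr hab
  have : b - c ≠ 0 := sub_ne_zero.mpr hbc
  have : c - a ≠ 0 := sub_ne_zero.mpr hca
  field_simp
  ring

theorem one_div_sub_mul_one_div_sub_right {x y c : K} (hxy : x ≠ y) (hx : x ≠ c) (hy : y ≠ c) :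
    1 / (x - c) * (1 / (y - c)) = 1 / (y - x) * (1 / (x - c) - 1 / (y - c)) := by
  have : y - x ≠ 0 := sub_ne_zero.mpr hxy.symm
  have : x - c ≠ 0 := sub_ne_zero.mpr hx
  have : y - c ≠ 0 := sub_ne_zero.mpr hy
  field_simp
  ring

theorem one_div_sub_mul_one_div_sub_left {x y c : K} (hxy : x ≠ y) (hx : c ≠ x) (hy : c ≠ y) :
    1 / (c - x) * (1 / (c - y)) = 1 / (x - y) * (1 / (c - x) - 1 / (c - y)) := by
  have : x - y ≠ 0 := sub_ne_zero.mpr hxy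
  have : c - x ≠ 0 := sub_ne_zero.mpr hx
  have : c - y ≠ 0 := sub_ne_zero.mpr hy
  field_simp
  ring

end PartialFractions

theorem stmt_8 (g h : ℂ → ℂ) (hg : Function.Injective g) (hh : Function.Injective h)
    (ε : ℂ) (hε : ε = 0 ∨ ε = 1)
    (hgh : ε = 1 → ∀ u v, g v ≠ h u) :
    let α : ℂ → ℂ → ℂ := fun u v => 1 / (g u - g v)
    let β : ℂ → ℂ → ℂ := fun u v => 1 / (h u - h v)
    let δ : ℂ → ℂ → ℂ := fun u v => ε / (g v - h u)
    ∀ u v w : ℂ, u ≠ v → u ≠ w → v ≠ w →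
      α v w * α u v + α w u * α v w + α u v * α w u = 0 ∧
      β v w * β u v + β w u * β v w + β u v * β w u = 0 ∧
      δ v u * δ v w = α w u * (δ v u - δ v w) ∧
      δ w v * δ u v = β w u * (δ w v - δ u v) := by
  intro α β δ u v w huv huw hvw
  refine ⟨one_div_sub_mul_one_div_sub_cyclic (hg.ne huv) (hg.ne hvw) (hg.ne huw.symm),
    one_div_sub_mul_one_div_sub_cyclic (hh.ne huv) (hh.ne hvw) (hh.ne huw.symm), ?_⟩
  rcases hε with rfl | rfl
  · simp [δ]
  · exact ⟨one_div_sub_mul_one_div_sub_right (hg.ne huw) (hgh rfl v u) (hgh rfl v w),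
      one_div_sub_mul_one_div_sub_left (hh.ne huw.symm) (hgh rfl w v) (hgh rfl u v)⟩
end

section
/- Let a₁, b₁ : ℂ → ℂ with b₁ injective, and define a(u,v) = a₁(v)b₁(u)/(b₁(u) - b₁(v)) and b(u,v) = a₁(u)b₁(v)/(b₁(v) - b₁(u)). Then a and b satisfy the pair of functional equations a(u,v)a(w,u) - a(w,u)a(w,v) + a(w,v)b(u,v) = 0 and b(u,v)b(w,v) - b(w,u)b(u,v) - b(w,v)a(w,u) = 0 at all points with pairwise-distinct b₁-values. -/
theorem stmt_10 (a₁ b₁ : ℂ → ℂ) (hb : Function.Injective b₁) :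
    let a : ℂ → ℂ → ℂ := fun u v => a₁ v * b₁ u / (b₁ u - b₁ v)
    let b : ℂ → ℂ → ℂ := fun u v => a₁ u * b₁ v / (b₁ v - b₁ u)
    ∀ u v w : ℂ, b₁ u ≠ b₁ v → b₁ u ≠ b₁ w → b₁ v ≠ b₁ w →
      a u v * a w u - a w u * a w v + a w v * b u v = 0 ∧
      b u v * b w v - b w u * b u v - b w v * a w u = 0 := by
  intro a b u v w huv huw hvw
  have h1 : b₁ u - b₁ v ≠ 0 := sub_ne_zero.mpr huv
  have h2 : b₁ u - b₁ w ≠ 0 := sub_ne_zero.mpr huw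
  have h3 : b₁ v - b₁ w ≠ 0 := sub_ne_zero.mpr hvw
  have h4 : b₁ v - b₁ u ≠ 0 := sub_ne_zero.mpr huv.symm
  have h5 : b₁ w - b₁ u ≠ 0 := sub_ne_zero.mpr huw.symm
  have h6 : b₁ w - b₁ v ≠ 0 := sub_ne_zero.mpr hvw.symm
  constructor <;> simp only [a, b] <;> field_simp <;> ring
end

section
/- Let A be an associative ℂ-algebra with structure constants cᵢⱼᵏ, and define aᵢⱼᵏ(u,v) = cᵢⱼᵏ/(u-v) and bᵢⱼᵏ(u,v) = cᵢⱼᵏ/(v-u). Then, for all pairwise-distinct u,v,w (with summation over the repeated index σ): (1) aᵢⱼ^σ(u,v)a_{kσ}^λ(w,u) - a_{ki}^σ(w,u)a_{σj}^λ(w,v) + a_{kσ}^λ(w,v)bᵢⱼ^σ(u,v) = 0; (2) bᵢⱼ^σ(u,v)b_{kσ}^λ(w,v) - b_{ki}^σ(w,u)b_{σj}^λ(u,v) - b_{σj}^λ(w,v)a_{ki}^σ(w,u) = 0; (3) a_{jk}^σ(v,w)b_{iσ}^λ(u,v) - bᵢⱼ^σ(u,v)a_{σk}^λ(v,w) = 0.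 -/
/-- `c i j k` is the structure constant `c_{ij}^k` of an associative algebra. -/
theorem stmt_12 (m : ℕ) (c : Fin m → Fin m → Fin m → ℂ)
    (hassoc : ∀ i j k l, (∑ σ, c i j σ * c σ k l) = ∑ σ, c j k σ * c i σ l) :
    let a : ℂ → ℂ → Fin m → Fin m → Fin m → ℂ := fun u v i j k => c i j k / (u - v)
    let b : ℂ → ℂ → Fin m → Fin m → Fin m → ℂ := fun u v i j k => c i j k / (v - u)
    ∀ (u v w : ℂ), u ≠ v → u ≠ w → v ≠ w → ∀ i j k l : Fin m,
      (∑ σ, (a u v i j σ * a w u k σ l - a w u k i σ * a w v σ j l +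
          a w v k σ l * b u v i j σ)) = 0 ∧
      (∑ σ, (b u v i j σ * b w v k σ l - b w u k i σ * b u v σ j l -
          b w v σ j l * a w u k i σ)) = 0 ∧
      (∑ σ, (a v w j k σ * b u v i σ l - b u v i j σ * a v w σ k l)) = 0 := by
  intro a b u v w huv huw hvw i j k l
  have huv' : u - v ≠ 0 := sub_ne_zero.mpr huv
  have hvu' : v - u ≠ 0 := sub_ne_zero.mpr huv.symm
  have huw' : u - w ≠ 0 := sub_ne_zero.mpr huw
  have hwu' : w - u ≠ 0 := sub_ne_zero.mpr huw.symm
  have hvw' : v - w ≠ 0 := sub_ne_zero.mpr hvw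
  have hwv' : w - v ≠ 0 := sub_ne_zero.mpr hvw.symm
  -- B = A : ∑ c k i σ * c σ j l = ∑ c i j σ * c k σ l
  have hBA : (∑ σ, c k i σ * c σ j l) = ∑ σ, c i j σ * c k σ l := hassoc k i j l
  -- assoc for third: ∑ c i j σ * c σ k l = ∑ c j k σ * c i σ l
  have h3 : (∑ σ, c i j σ * c σ k l) = ∑ σ, c j k σ * c i σ l := hassoc i j k l
  refine ⟨?_, ?_, ?_⟩
  · have hsum : (∑ σ, (a u v i j σ * a w u k σ l - a w u k i σ * a w v σ j l +
        a w v k σ l * b u v i j σ)) =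
        (∑ σ, c i j σ * c k σ l) * ((u - v)⁻¹ * (w - u)⁻¹)
        - (∑ σ, c k i σ * c σ j l) * ((w - u)⁻¹ * (w - v)⁻¹)
        + (∑ σ, c i j σ * c k σ l) * ((w - v)⁻¹ * (v - u)⁻¹) := by
      simp only [Finset.sum_mul, ← Finset.sum_add_distrib, ← Finset.sum_sub_distrib, a, b]
      apply Finset.sum_congr rfl
      intro σ _
      field_simp
    rw [hsum, hBA]
    field_simp
    ring
  · have hsum : (∑ σ, (b u v i j σ * b w v k σ l - b w u k i σ * b u v σ j l -
        b w v σ j l * a w u k i σ)) =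
        (∑ σ, c i j σ * c k σ l) * ((v - u)⁻¹ * (v - w)⁻¹)
        - (∑ σ, c k i σ * c σ j l) * ((u - w)⁻¹ * (v - u)⁻¹)
        - (∑ σ, c k i σ * c σ j l) * ((v - w)⁻¹ * (w - u)⁻¹) := by
      simp only [Finset.sum_mul, ← Finset.sum_sub_distrib, a, b]
      apply Finset.sum_congr rfl
      intro σ _
      field_simp
    rw [hsum, hBA]
    field_simp
    ring
  · have hsum : (∑ σ, (a v w j k σ * b u v i σ l - b u v i j σ * a v w σ k l)) =
        (∑ σ, c j k σ * c i σ l) * ((v - w)⁻¹ * (v - u)⁻¹)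
        - (∑ σ, c i j σ * c σ k l) * ((v - u)⁻¹ * (v - w)⁻¹) := by
      simp only [Finset.sum_mul, ← Finset.sum_sub_distrib, a, b]
      apply Finset.sum_congr rfl
      intro σ _
      field_simp
    rw [hsum, h3]
    ring
end

section
/- Let A be an associative algebra and let functions a, b : ℂ² → (A ⊗ A-type coefficient data) be given by a_{ij}^k(u,v) = c_{is}^k r_j^s(u,v) and b_{ij}^k(u,v) = c_{sj}^k r_i^s(v,u), where c are the structure constants of A and r(u,v) : A → A satisfies the parameter-dependent Rota–Baxter equation (r(u,w)x)(r(u,v)y) - r(u,v)((r(v,w)x)y) - r(u,w)(x(r(w,v)y)) = 0 for all x, y ∈ A and all u,v,w ∈ ℂ. Then a and b satisfy the three associativity relations: a_{ij}^σ a_{kσ}^λ(w,u) - a_{ki}^σ(w,u)a_{σj}^λ(w,v) + a_{kσ}^λ(w,v)b_{ij}^σ(u,v) = 0, b_{ij}^σ(u,v)b_{kσ}^λ(w,v) - b_{ki}^σ(w,u)b_{σj}^λ(u,v) - b_{σj}^λ(w,v)a_{ki}^σ(w,u) = 0, and a_{jk}^σ(v,w)b_{iσ}^λ(u,v) - b_{ij}^σ(u,v)a_{σk}^λ(v,w)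 = 0. -/
private lemma aux3 {m : ℕ} (f g : Fin m → Fin m → ℂ) :
    (∑ σ, (∑ s, f s σ) * (∑ t, g t σ)) = ∑ s, ∑ t, ∑ σ, f s σ * g t σ := by
  simp only [Finset.sum_mul, Finset.mul_sum]
  calc (∑ σ, ∑ t, ∑ s, f s σ * g t σ)
      = ∑ t, ∑ σ, ∑ s, f s σ * g t σ :=
        Finset.sum_comm (f := fun σ t => ∑ s, f s σ * g t σ)
    _ = ∑ t, ∑ s, ∑ σ, f s σ * g t σ :=
        Finset.sum_congr rfl fun t _ =>
          Finset.sum_comm (f := fun σ s => f s σ * g t σ)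
    _ = ∑ s, ∑ t, ∑ σ, f s σ * g t σ :=
        Finset.sum_comm (f := fun t s => ∑ σ, f s σ * g t σ)

private lemma reord23 {m : ℕ} (f : Fin m → Fin m → Fin m → ℂ) :
    (∑ a, ∑ b, ∑ d, f a b d) = ∑ a, ∑ d, ∑ b, f a b d :=
  Finset.sum_congr rfl fun _ _ => Finset.sum_comm

private lemma pull {m : ℕ} (d : Fin m → ℂ) (f : Fin m → Fin m → Fin m → ℂ) :
    (∑ t, d t * ∑ p, ∑ q, f p q t) = ∑ p, ∑ q, ∑ t, d t * f p q t := by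
  rw [show (∑ p, ∑ q, ∑ t, d t * f p q t) = ∑ t, ∑ p, ∑ q, d t * f p q t from
    calc (∑ p, ∑ q, ∑ t, d t * f p q t)
        = ∑ p, ∑ t, ∑ q, d t * f p q t :=
          Finset.sum_congr rfl fun p _ =>
            Finset.sum_comm (f := fun q t => d t * f p q t)
      _ = ∑ t, ∑ p, ∑ q, d t * f p q t :=
          Finset.sum_comm (f := fun p t => ∑ q, d t * f p q t)]
  exact Finset.sum_congr rfl fun t _ => by
    rw [Finset.mul_sum]
    exact Finset.sum_congr rfl fun p _ => Finset.mul_sum _ _ _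

/-- `c i j k` are the structure constants `c_{ij}^k` of an associative algebra `A`;
`r u v i s` is the matrix `r_i^s(u,v)` of the linear operator `r(u,v) : A → A`.
The parameter-dependent Rota–Baxter equation
`(r(u,w)x)(r(u,v)y) = r(u,v)((r(v,w)x)y) + r(u,w)(x(r(w,v)y))`
is written in components on basis elements `x = e_i`, `y = e_j`. -/
theorem stmt_13 (m : ℕ) (c : Fin m → Fin m → Fin m → ℂ)
    (hassoc : ∀ i j k l, (∑ σ, c i j σ * c σ k l) = ∑ σ, c j k σ * c i σ l)
    (r : ℂ → ℂ → Fin m → Fin m → ℂ)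
    (hRB : ∀ (u v w : ℂ) (i j k : Fin m),
      (∑ p, ∑ q, r u w i p * r u v j q * c p q k) =
        (∑ p, ∑ s, r v w i p * c p j s * r u v s k) +
        (∑ q, ∑ s, r w v j q * c i q s * r u w s k))
    (a b : ℂ → ℂ → Fin m → Fin m → Fin m → ℂ)
    (ha : ∀ u v i j k, a u v i j k = ∑ s, c i s k * r u v j s)
    (hb : ∀ u v i j k, b u v i j k = ∑ s, c s j k * r v u i s) :
    ∀ (u v w : ℂ) (i j k l : Fin m),
      (∑ σ, (a u v i j σ * a w u k σ l - a w u k i σ * a w v σ j l +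
          a w v k σ l * b u v i j σ)) = 0 ∧
      (∑ σ, (b u v i j σ * b w v k σ l - b w u k i σ * b u v σ j l -
          b w v σ j l * a w u k i σ)) = 0 ∧
      (∑ σ, (a v w j k σ * b u v i σ l - b u v i j σ * a v w σ k l)) = 0 := by
  intro u v w i j k l
  refine ⟨?_, ?_, ?_⟩
  · -- Part 1: from hRB w v u i j
    simp only [ha, hb]
    rw [Finset.sum_add_distrib, Finset.sum_sub_distrib]
    have e1 : (∑ σ, (∑ s, c i s σ * r u v j s) * (∑ t, c k t l * r w u σ t))
        = ∑ t, c k t l * (∑ q, ∑ s, r u v j q * c i q s * r w u s t) := by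
      rw [aux3 (fun s σ => c i s σ * r u v j s) (fun t σ => c k t l * r w u σ t),
        pull (fun t => c k t l) (fun q s t => r u v j q * c i q s * r w u s t),
        reord23 (fun s t σ => (c i s σ * r u v j s) * (c k t l * r w u σ t))]
      exact Finset.sum_congr rfl fun s _ => Finset.sum_congr rfl fun σ _ =>
        Finset.sum_congr rfl fun t _ => by ring
    have e2 : (∑ σ, (∑ s, c k s σ * r w u i s) * (∑ t, c σ t l * r w v j t))
        = ∑ t, c k t l * (∑ p, ∑ q, r w u i p * r w v j q * c p q t) := by
      rw [aux3 (fun s σ => c k s σ * r w u i s) (fun t σ => c σ t l * r w v j t),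
        pull (fun t => c k t l) (fun p q t => r w u i p * r w v j q * c p q t)]
      refine Finset.sum_congr rfl fun s _ => Finset.sum_congr rfl fun t _ => ?_
      have h := hassoc k s t l
      calc (∑ σ, (c k s σ * r w u i s) * (c σ t l * r w v j t))
          = (∑ σ, c k s σ * c σ t l) * (r w u i s * r w v j t) := by
            rw [Finset.sum_mul]
            exact Finset.sum_congr rfl fun σ _ => by ring
        _ = (∑ σ, c s t σ * c k σ l) * (r w u i s * r w v j t) := by rw [h]
        _ = ∑ σ, c k σ l * (r w u i s * r w v j t * c s t σ) := by
            rw [Finset.sum_mul]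
            exact Finset.sum_congr rfl fun σ _ => by ring
    have e3 : (∑ σ, (∑ t, c k t l * r w v σ t) * (∑ s, c s j σ * r v u i s))
        = ∑ t, c k t l * (∑ p, ∑ s, r v u i p * c p j s * r w v s t) := by
      rw [aux3 (fun t σ => c k t l * r w v σ t) (fun s σ => c s j σ * r v u i s),
        pull (fun t => c k t l) (fun p s t => r v u i p * c p j s * r w v s t),
        show (∑ t, ∑ s, ∑ σ, (c k t l * r w v σ t) * (c s j σ * r v u i s))
            = ∑ s, ∑ t, ∑ σ, (c k t l * r w v σ t) * (c s j σ * r v u i s)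
          from Finset.sum_comm,
        reord23 (fun s t σ => (c k t l * r w v σ t) * (c s j σ * r v u i s))]
      exact Finset.sum_congr rfl fun s _ => Finset.sum_congr rfl fun σ _ =>
        Finset.sum_congr rfl fun t _ => by ring
    rw [e1, e2, e3, ← Finset.sum_sub_distrib, ← Finset.sum_add_distrib]
    refine Finset.sum_eq_zero fun t _ => ?_
    linear_combination (-(c k t l)) * hRB w v u i j t
  · -- Part 2: from hRB v u w k i
    simp only [ha, hb]
    rw [Finset.sum_sub_distrib, Finset.sum_sub_distrib]
    have f1 : (∑ σ, (∑ s, c s j σ * r v u i s) * (∑ t, c t σ l * r v w k t))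
        = ∑ t, c t j l * (∑ p, ∑ q, r v w k p * r v u i q * c p q t) := by
      rw [aux3 (fun s σ => c s j σ * r v u i s) (fun t σ => c t σ l * r v w k t),
        pull (fun t => c t j l) (fun p q t => r v w k p * r v u i q * c p q t),
        show (∑ s, ∑ t, ∑ σ, (c s j σ * r v u i s) * (c t σ l * r v w k t))
            = ∑ t, ∑ s, ∑ σ, (c s j σ * r v u i s) * (c t σ l * r v w k t)
          from Finset.sum_comm]
      refine Finset.sum_congr rfl fun t _ => Finset.sum_congr rfl fun s _ => ?_
      have h := hassoc t s j l
      calc (∑ σ, (c s j σ * r v u i s) * (c t σ l * r v w k t))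
          = (∑ σ, c s j σ * c t σ l) * (r v u i s * r v w k t) := by
            rw [Finset.sum_mul]
            exact Finset.sum_congr rfl fun σ _ => by ring
        _ = (∑ σ, c t s σ * c σ j l) * (r v u i s * r v w k t) := by rw [← h]
        _ = ∑ σ, c σ j l * (r v w k t * r v u i s * c t s σ) := by
            rw [Finset.sum_mul]
            exact Finset.sum_congr rfl fun σ _ => by ring
    have f2 : (∑ σ, (∑ s, c s i σ * r u w k s) * (∑ t, c t j l * r v u σ t))
        = ∑ t, c t j l * (∑ p, ∑ s, r u w k p * c p i s * r v u s t) := by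
      rw [aux3 (fun s σ => c s i σ * r u w k s) (fun t σ => c t j l * r v u σ t),
        pull (fun t => c t j l) (fun p s t => r u w k p * c p i s * r v u s t),
        reord23 (fun s t σ => (c s i σ * r u w k s) * (c t j l * r v u σ t))]
      exact Finset.sum_congr rfl fun s _ => Finset.sum_congr rfl fun σ _ =>
        Finset.sum_congr rfl fun t _ => by ring
    have f3 : (∑ σ, (∑ t, c t j l * r v w σ t) * (∑ s, c k s σ * r w u i s))
        = ∑ t, c t j l * (∑ q, ∑ s, r w u i q * c k q s * r v w s t) := by
      rw [aux3 (fun t σ => c t j l * r v w σ t) (fun s σ => c k s σ * r w u i s),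
        pull (fun t => c t j l) (fun q s t => r w u i q * c k q s * r v w s t),
        show (∑ t, ∑ s, ∑ σ, (c t j l * r v w σ t) * (c k s σ * r w u i s))
            = ∑ s, ∑ t, ∑ σ, (c t j l * r v w σ t) * (c k s σ * r w u i s)
          from Finset.sum_comm,
        reord23 (fun s t σ => (c t j l * r v w σ t) * (c k s σ * r w u i s))]
      exact Finset.sum_congr rfl fun s _ => Finset.sum_congr rfl fun σ _ =>
        Finset.sum_congr rfl fun t _ => by ring
    rw [f1, f2, f3, ← Finset.sum_sub_distrib, ← Finset.sum_sub_distrib]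
    refine Finset.sum_eq_zero fun t _ => ?_
    linear_combination (c t j l) * hRB v u w k i t
  · -- Part 3: pure associativity
    simp only [ha, hb]
    rw [Finset.sum_sub_distrib,
      aux3 (fun s σ => c j s σ * r v w k s) (fun t σ => c t σ l * r v u i t),
      aux3 (fun t σ => c t j σ * r v u i t) (fun s σ => c σ s l * r v w k s),
      sub_eq_zero]
    conv_rhs => rw [Finset.sum_comm]
    refine Finset.sum_congr rfl fun s _ => Finset.sum_congr rfl fun t _ => ?_
    have h := hassoc t j s l
    calc (∑ σ, (c j s σ * r v w k s) * (c t σ l * r v u i t))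
        = (∑ σ, c j s σ * c t σ l) * (r v w k s * r v u i t) := by
          rw [Finset.sum_mul]
          exact Finset.sum_congr rfl fun σ _ => by ring
      _ = (∑ σ, c t j σ * c σ s l) * (r v w k s * r v u i t) := by rw [h]
      _ = ∑ σ, (c t j σ * r v u i t) * (c σ s l * r v w k s) := by
          rw [Finset.sum_mul]
          exact Finset.sum_congr rfl fun σ _ => by ring
end

section
/- Let A = Mat_m(ℂ) and let r be given by a tensor r^{km}_{ij} satisfying r^{λσ}_{αβ} r^{μν}_{στ} + r^{μσ}_{βτ} r^{νλ}_{σα} + r^{νσ}_{τα} r^{λμ}_{σβ} = 0 and r^{σε}_{αβ} = -r^{εσ}_{βα}. Then the operator R : Mat_m(ℂ) → Mat_m(ℂ) given by R(x)^p_q = r^{mp}_{nq} x^n_m satisfies the Rota–Baxter equation R(x)R(y) = R(x R(y)) + R(R(x) y) for all x, y ∈ Mat_m(ℂ). -/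
/-- `r a b i j` denotes the tensor component `r^{ab}_{ij}` (upper indices first). -/
theorem stmt_15 (m : ℕ) (r : Fin m → Fin m → Fin m → Fin m → ℂ)
    (hAYBE : ∀ lam mu nu alpha beta tau : Fin m,
      (∑ σ, (r lam σ alpha beta * r mu nu σ tau + r mu σ beta tau * r nu lam σ alpha +
        r nu σ tau alpha * r lam mu σ beta)) = 0)
    (hskew : ∀ σ ε α β : Fin m, r σ ε α β = -r ε σ β α) :
    let R : Matrix (Fin m) (Fin m) ℂ → Matrix (Fin m) (Fin m) ℂ := fun x =>
      Matrix.of fun p q => ∑ n, ∑ mm, r mm p n q * x n mm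
    ∀ x y : Matrix (Fin m) (Fin m) ℂ,
      R x * R y = R (x * R y) + R (R x * y) := by
  intro R x y
  have key : ∀ p q a b c d : Fin m,
      (∑ s, r b p a s * r d s c q)
        = (∑ σ, r σ p a q * r d b c σ) + ∑ σ, r d p σ q * r b σ a c := by
    intro p q a b c d
    have h := hAYBE b d p a c q
    have h2 : ∀ σ : Fin m,
        r b p a σ * r d σ c q - (r σ p a q * r d b c σ + r d p σ q * r b σ a c)
        = -(r b σ a c * r d p σ q + r d σ c q * r p b σ a + r p σ q a * r b d σ c) := by
      intro σ
      rw [hskew b p a σ, hskew σ p a q, hskew d b c σ]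
      ring
    have h3 : (∑ σ, (r b p a σ * r d σ c q
        - (r σ p a q * r d b c σ + r d p σ q * r b σ a c))) = 0 := by
      simp only [h2, Finset.sum_neg_distrib]
      rw [← neg_zero, ← h]
    rw [Finset.sum_sub_distrib, Finset.sum_add_distrib] at h3
    linear_combination h3
  ext p q
  simp only [R, Matrix.mul_apply, Matrix.add_apply, Matrix.of_apply]
  simp only [Finset.sum_mul, Finset.mul_sum]
  have hL : (∑ s : Fin m, ∑ c : Fin m, ∑ d : Fin m, ∑ a : Fin m, ∑ b : Fin m,
        r b p a s * x a b * (r d s c q * y c d))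
      = ∑ a : Fin m, ∑ b : Fin m, ∑ c : Fin m, ∑ d : Fin m, ∑ s : Fin m,
        r b p a s * r d s c q * (x a b * y c d) := by
    calc (∑ s : Fin m, ∑ c : Fin m, ∑ d : Fin m, ∑ a : Fin m, ∑ b : Fin m,
          r b p a s * x a b * (r d s c q * y c d))
        = ∑ v : Fin m × Fin m × Fin m × Fin m × Fin m,
            r v.2.2.2.2 p v.2.2.2.1 v.1 * x v.2.2.2.1 v.2.2.2.2 *
              (r v.2.2.1 v.1 v.2.1 q * y v.2.1 v.2.2.1) := by
          simp [Fintype.sum_prod_type]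
      _ = ∑ v : Fin m × Fin m × Fin m × Fin m × Fin m,
            r v.2.1 p v.1 v.2.2.2.2 * r v.2.2.2.1 v.2.2.2.2 v.2.2.1 q *
              (x v.1 v.2.1 * y v.2.2.1 v.2.2.2.1) :=
          Fintype.sum_equiv
            ⟨fun v => (v.2.2.2.1, v.2.2.2.2, v.2.1, v.2.2.1, v.1),
             fun v => (v.2.2.2.2, v.2.2.1, v.2.2.2.1, v.1, v.2.1),
             fun v => rfl, fun v => rfl⟩ _ _ (fun v => by dsimp; ring)
      _ = _ := by simp [Fintype.sum_prod_type]
  have hR1 : (∑ a : Fin m, ∑ s : Fin m, ∑ b : Fin m, ∑ c : Fin m, ∑ d : Fin m,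
        r s p a q * (x a b * (r d b c s * y c d)))
      = ∑ a : Fin m, ∑ b : Fin m, ∑ c : Fin m, ∑ d : Fin m, ∑ s : Fin m,
        r s p a q * r d b c s * (x a b * y c d) := by
    calc (∑ a : Fin m, ∑ s : Fin m, ∑ b : Fin m, ∑ c : Fin m, ∑ d : Fin m,
          r s p a q * (x a b * (r d b c s * y c d)))
        = ∑ v : Fin m × Fin m × Fin m × Fin m × Fin m,
            r v.2.1 p v.1 q * (x v.1 v.2.2.1 * (r v.2.2.2.2 v.2.2.1 v.2.2.2.1 v.2.1 * y v.2.2.2.1 v.2.2.2.2)) := by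
          simp [Fintype.sum_prod_type]
      _ = ∑ v : Fin m × Fin m × Fin m × Fin m × Fin m,
            r v.2.2.2.2 p v.1 q * r v.2.2.2.1 v.2.1 v.2.2.1 v.2.2.2.2 *
              (x v.1 v.2.1 * y v.2.2.1 v.2.2.2.1) :=
          Fintype.sum_equiv
            ⟨fun v => (v.1, v.2.2.1, v.2.2.2.1, v.2.2.2.2, v.2.1),
             fun v => (v.1, v.2.2.2.2, v.2.1, v.2.2.1, v.2.2.2.1),
             fun v => rfl, fun v => rfl⟩ _ _ (fun v => by dsimp; ring)
      _ = _ := by simp [Fintype.sum_prod_type]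
  have hR2 : (∑ s : Fin m, ∑ d : Fin m, ∑ c : Fin m, ∑ a : Fin m, ∑ b : Fin m,
        r d p s q * (r b s a c * x a b * y c d))
      = ∑ a : Fin m, ∑ b : Fin m, ∑ c : Fin m, ∑ d : Fin m, ∑ s : Fin m,
        r d p s q * r b s a c * (x a b * y c d) := by
    calc (∑ s : Fin m, ∑ d : Fin m, ∑ c : Fin m, ∑ a : Fin m, ∑ b : Fin m,
          r d p s q * (r b s a c * x a b * y c d))
        = ∑ v : Fin m × Fin m × Fin m × Fin m × Fin m,
            r v.2.1 p v.1 q * (r v.2.2.2.2 v.1 v.2.2.2.1 v.2.2.1 * x v.2.2.2.1 v.2.2.2.2 * y v.2.2.1 v.2.1) := by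
          simp [Fintype.sum_prod_type]
      _ = ∑ v : Fin m × Fin m × Fin m × Fin m × Fin m,
            r v.2.2.2.1 p v.2.2.2.2 q * r v.2.1 v.2.2.2.2 v.1 v.2.2.1 *
              (x v.1 v.2.1 * y v.2.2.1 v.2.2.2.1) :=
          Fintype.sum_equiv
            ⟨fun v => (v.2.2.2.1, v.2.2.2.2, v.2.2.1, v.2.1, v.1),
             fun v => (v.2.2.2.2, v.2.2.2.1, v.2.2.1, v.1, v.2.1),
             fun v => rfl, fun v => rfl⟩ _ _ (fun v => by dsimp; ring)
      _ = _ := by simp [Fintype.sum_prod_type]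
  rw [hL, hR1, hR2, ← Finset.sum_add_distrib]
  refine Finset.sum_congr rfl fun a _ => ?_
  rw [← Finset.sum_add_distrib]
  refine Finset.sum_congr rfl fun b _ => ?_
  rw [← Finset.sum_add_distrib]
  refine Finset.sum_congr rfl fun c _ => ?_
  rw [← Finset.sum_add_distrib]
  refine Finset.sum_congr rfl fun d _ => ?_
  rw [← Finset.sum_mul, ← Finset.sum_mul, ← Finset.sum_mul, key p q a b c d, add_mul]
end
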